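/- arXiv:2407.15760 — 2 statements merged into one kernel-verified Lean document; each statement's English description precedes it below -/
import Mathlib

section
/- If 1 < D ≤ 2, then for every point (x,y) of the closed upper half-plane, J(x,y) ≤ 0 if and only if x² + y² ≤ 4; that is, the Wulff shape {(x,y) : y ≥ 0, J(x,y) ≤ 0} is exactly the closed half-disc of radius 2 centered at the origin. -/
open Real Filter Set

noncomputable section

/-- The field Lagrangian `L_f(v₁,v₂) = (v₁² + v₂²)/4 − 1`. -/
def Lf (v₁ v₂ : ℝ) : ℝ := (v₁ ^ 2 + v₂ ^ 2) / 4 - 1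

/-- The effective road Hamiltonian `H_r(q) = q² + (p_q)² + 1` built from the
critical-slope function `pq`. -/
def Hr (pq : ℝ → ℝ) (q : ℝ) : ℝ := q ^ 2 + pq q ^ 2 + 1

/-- The road Lagrangian: the Legendre transform of `Hr`. -/
def Lr (pq : ℝ → ℝ) (v : ℝ) : ℝ := ⨆ q : ℝ, (v * q - Hr pq q)

/-- `pq` assigns to each `q` the critical slope `p_q`: it equals `0` when
`(D−1)q² ≤ 1`, and otherwise it is the unique positive root of
`(D−1)q² = p² + 1 + μp/(κν + p)`. -/
def IsCriticalSlope (D μ ν κ : ℝ) (pq : ℝ → ℝ) : Prop :=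
  ∀ q : ℝ,
    ((D - 1) * q ^ 2 ≤ 1 → pq q = 0) ∧
    (1 < (D - 1) * q ^ 2 →
      0 < pq q ∧ (D - 1) * q ^ 2 = pq q ^ 2 + 1 + μ * pq q / (κ * ν + pq q))

/-- The set of candidate costs in the control problem at a point `(x,y)` with
`x ≥ 0`, `y ≥ 0`: the pure-field cost, the broken road-then-field costs, and
(when `y = 0`) the pure-road cost. -/
def Jset (pq : ℝ → ℝ) (x y : ℝ) : Set ℝ :=
  {Lf x y} ∪
    {c | ∃ τ z : ℝ, 0 < τ ∧ τ < 1 ∧ 0 ≤ z ∧ z ≤ x ∧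
      c = (1 - τ) * Lf ((x - z) / (1 - τ)) (y / (1 - τ)) + τ * Lr pq (z / τ)} ∪
    (if y = 0 then {Lr pq x} else ∅)

/-- The value function `J(x,y)`, extended evenly in `x`. -/
def J (pq : ℝ → ℝ) (x y : ℝ) : ℝ := sInf (Jset pq |x| y)
/-- The field Hamiltonian `H_f(q,p) = q² + p² + 1`. -/
def Hf (q p : ℝ) : ℝ := q ^ 2 + p ^ 2 + 1

/-- The road boundary Hamiltonian `F₀(q,p) = Dq² − μp/(κν + p)`. -/
def F0 (D μ ν κ q p : ℝ) : ℝ := D * q ^ 2 - μ * p / (κ * ν + p)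

/-- The spreading speed along the road, `inf_{q>0} H_r(q)/q`. -/
def roadSpeed (pq : ℝ → ℝ) : ℝ := sInf ((fun q => Hr pq q / q) '' Set.Ioi (0 : ℝ))

/-- The directional spreading speed in direction `ϑ` (measured from the
positive `y`-axis). -/
def cstar (pq : ℝ → ℝ) (ϑ : ℝ) : ℝ :=
  sSup {r : ℝ | 0 ≤ r ∧ J pq (r * Real.sin ϑ) (r * Real.cos ϑ) ≤ 0}

/-- Reflection across the line through the origin in direction `(cos a, sin a)`. -/
def Psi (a : ℝ) (p : ℝ × ℝ) : ℝ × ℝ :=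
  (p.1 * Real.cos (2 * a) + p.2 * Real.sin (2 * a),
   p.1 * Real.sin (2 * a) - p.2 * Real.cos (2 * a))

/-- The closed cone of opening angle `2a` between the positive `x`-axis and the
ray at angle `π/2 − 2a` from the positive `y`-axis. -/
def coneA (a : ℝ) : Set (ℝ × ℝ) :=
  {p | ∃ r ϑ : ℝ, 0 ≤ r ∧ π / 2 - 2 * a ≤ ϑ ∧ ϑ ≤ π / 2 ∧
    p = (r * Real.sin ϑ, r * Real.cos ϑ)}

/-!
For `D ≤ 2` the critical slope vanishes at `q = 1`, so testing the supremum defining `L_r` at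
`q = 1` gives `L_r(v) ≥ v − 2`, the same linear minorant that AM–GM gives for the field,
`L_f(v) ≥ |v| − 2`. Both bounds are homogeneous along a path, so by the triangle inequality every
candidate cost at `(x, y)` is at least `|(x, y)| − 2`: the road never helps, and `J ≤ 0` forces
`|(x, y)| ≤ 2`. Conversely the straight field path costs `|(x, y)|²/4 − 1 ≤ 0` inside the disc.
-/

lemma le_Lr (pq : ℝ → ℝ) (v q : ℝ) : v * q - Hr pq q ≤ Lr pq v := by
  refine le_ciSup (f := fun q => v * q - Hr pq q) ⟨v ^ 2 / 4 - 1, ?_⟩ q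
  rintro _ ⟨q, rfl⟩
  unfold Hr
  nlinarith [sq_nonneg (pq q), sq_nonneg (v - 2 * q)]

lemma sub_two_le_Lr {pq : ℝ → ℝ} (h1 : pq 1 = 0) (v : ℝ) : v - 2 ≤ Lr pq v := by
  have h := le_Lr pq v 1
  rw [Hr, h1] at h
  linarith

lemma sqrt_sub_le_mul_Lf {s : ℝ} (hs : 0 < s) (a b : ℝ) :
    √(a ^ 2 + b ^ 2) - 2 * s ≤ s * Lf (a / s) (b / s) := by
  set r := √(a ^ 2 + b ^ 2)
  have hr : r ^ 2 = a ^ 2 + b ^ 2 := Real.sq_sqrt (by positivity)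
  have hLf : s * Lf (a / s) (b / s) = r ^ 2 / (4 * s) - s := by
    rw [hr, Lf]
    field_simp
  have amgm : r - s ≤ r ^ 2 / (4 * s) := by
    rw [le_div_iff₀ (by positivity)]
    nlinarith [sq_nonneg (r - 2 * s)]
  linarith

lemma sqrt_le_sqrt_sub_add {a z : ℝ} (b : ℝ) (hz : 0 ≤ z) :
    √(a ^ 2 + b ^ 2) ≤ √((a - z) ^ 2 + b ^ 2) + z := by
  have hB := Real.sq_sqrt (by positivity : 0 ≤ (a - z) ^ 2 + b ^ 2)
  have h : a - z ≤ √((a - z) ^ 2 + b ^ 2) :=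
    (le_abs_self _).trans (Real.abs_le_sqrt (by nlinarith [sq_nonneg b]))
  rw [Real.sqrt_le_left (by positivity)]
  nlinarith [mul_le_mul_of_nonneg_left h hz]

lemma sqrt_sub_two_le_brokenCost {pq : ℝ → ℝ} (h1 : pq 1 = 0) {X y τ z : ℝ}
    (hτ0 : 0 < τ) (hτ1 : τ < 1) (hz : 0 ≤ z) :
    √(X ^ 2 + y ^ 2) - 2 ≤
      (1 - τ) * Lf ((X - z) / (1 - τ)) (y / (1 - τ)) + τ * Lr pq (z / τ) := by
  have hfield := sqrt_sub_le_mul_Lf (sub_pos.2 hτ1) (X - z) y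
  have hroad : z - 2 * τ ≤ τ * Lr pq (z / τ) :=
    calc z - 2 * τ = τ * (z / τ - 2) := by field_simp
      _ ≤ τ * Lr pq (z / τ) := mul_le_mul_of_nonneg_left (sub_two_le_Lr h1 _) hτ0.le
  linarith [sqrt_le_sqrt_sub_add (a := X) y hz]

lemma Lf_mem_Jset (pq : ℝ → ℝ) (x y : ℝ) : Lf x y ∈ Jset pq x y :=
  Or.inl (Or.inl rfl)

lemma sqrt_sub_two_le_of_mem_Jset {pq : ℝ → ℝ} (h1 : pq 1 = 0) {X y c : ℝ} (hX : 0 ≤ X)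
    (hc : c ∈ Jset pq X y) : √(X ^ 2 + y ^ 2) - 2 ≤ c := by
  rcases hc with (rfl | ⟨τ, z, hτ0, hτ1, hz, -, rfl⟩) | hc
  · simpa using sqrt_sub_le_mul_Lf one_pos X y
  · exact sqrt_sub_two_le_brokenCost h1 hτ0 hτ1 hz
  · split_ifs at hc with hy
    · rw [mem_singleton_iff.1 hc, hy]
      simpa [Real.sqrt_sq hX] using sub_two_le_Lr h1 X
    · exact absurd hc (notMem_empty c)

lemma bddBelow_Jset {pq : ℝ → ℝ} (h1 : pq 1 = 0) (x y : ℝ) : BddBelow (Jset pq |x| y) :=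
  ⟨_, fun _ hc => sqrt_sub_two_le_of_mem_Jset h1 (abs_nonneg x) hc⟩

lemma sqrt_sub_two_le_J {pq : ℝ → ℝ} (h1 : pq 1 = 0) (x y : ℝ) :
    √(x ^ 2 + y ^ 2) - 2 ≤ J pq x y := by
  rw [← sq_abs x]
  exact le_csInf ⟨_, Lf_mem_Jset pq _ y⟩ fun _ hc =>
    sqrt_sub_two_le_of_mem_Jset h1 (abs_nonneg x) hc

lemma J_le_Lf {pq : ℝ → ℝ} (h1 : pq 1 = 0) (x y : ℝ) : J pq x y ≤ Lf |x| y :=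
  csInf_le (bddBelow_Jset h1 x y) (Lf_mem_Jset pq _ y)

theorem wulff_half_disc_general
    (D μ ν κ : ℝ) (hD2 : D ≤ 2)
    (pq : ℝ → ℝ) (hpq : IsCriticalSlope D μ ν κ pq)
    (x y : ℝ) :
    J pq x y ≤ 0 ↔ x ^ 2 + y ^ 2 ≤ 4 := by
  have h1 : pq 1 = 0 := (hpq 1).1 (by linarith)
  constructor
  · intro hJ
    have hr : √(x ^ 2 + y ^ 2) ≤ 2 := by linarith [sqrt_sub_two_le_J h1 x y]
    linarith [(Real.sqrt_le_left zero_le_two).1 hr]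
  · intro h
    calc J pq x y ≤ Lf |x| y := J_le_Lf h1 x y
      _ ≤ 0 := by rw [Lf, sq_abs]; linarith

/-- When `1 < D ≤ 2`, the Wulff shape is exactly the closed half-disc of
radius `2`: for `y ≥ 0`, `J(x,y) ≤ 0 ↔ x² + y² ≤ 4`. -/
theorem wulff_half_disc
    (D μ ν κ : ℝ) (hD : 1 < D) (hD2 : D ≤ 2)
    (hμ : 0 < μ) (hν : 0 < ν) (hκ : 0 < κ)
    (pq : ℝ → ℝ) (hpq : IsCriticalSlope D μ ν κ pq)
    (x y : ℝ) (hy : 0 ≤ y) :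
    J pq x y ≤ 0 ↔ x ^ 2 + y ^ 2 ≤ 4 :=
  wulff_half_disc_general D μ ν κ hD2 pq hpq x y
end
end

section
/- For every x ∈ ℝ and every y > 2, one has J(x,y) > 0. Consequently, the Wulff shape {(x,y) : y ≥ 0, J(x,y) ≤ 0} is contained in the strip {y ≤ 2}, and c_*(ϑ)·cos ϑ ≤ 2 for every ϑ ∈ [0, π/2]. -/
open Real Filter Set

noncomputable section

/-!
Taking `q = 0` in the Legendre transform gives `L_r ≥ -H_r(0) = -1`, and a field leg that climbs
to height `y` in time `1 - τ` costs at least `y² / (4(1 - τ)) - (1 - τ) ≥ y²/4 - (1 - τ)`. Hence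
every candidate cost, and so `J(x, y)`, is at least `y²/4 - 1`, which is positive once `y > 2`.
-/

lemma bddAbove_range_Lr (pq : ℝ → ℝ) (v : ℝ) : BddAbove (Set.range fun q => v * q - Hr pq q) := by
  refine ⟨v ^ 2 / 4 - 1, ?_⟩
  rintro c ⟨q, rfl⟩
  dsimp only [Hr]
  nlinarith [sq_nonneg (v - 2 * q), sq_nonneg (pq q)]

lemma neg_Hr_zero_le_Lr (pq : ℝ → ℝ) (v : ℝ) : -Hr pq 0 ≤ Lr pq v := by
  simpa [Lr] using le_ciSup (bddAbove_range_Lr pq v) 0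

lemma IsCriticalSlope.map_zero {D μ ν κ : ℝ} {pq : ℝ → ℝ} (hpq : IsCriticalSlope D μ ν κ pq) :
    pq 0 = 0 :=
  (hpq 0).1 (by norm_num)

lemma neg_one_le_Lr {pq : ℝ → ℝ} (hpq0 : pq 0 = 0) (v : ℝ) : -1 ≤ Lr pq v := by
  simpa [Hr, hpq0] using neg_Hr_zero_le_Lr pq v

lemma sub_le_mul_Lf_div {s : ℝ} (hs₀ : 0 < s) (hs₁ : s ≤ 1) (a y : ℝ) :
    y ^ 2 / 4 - s ≤ s * Lf (a / s) (y / s) := by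
  have hLf : s * Lf (a / s) (y / s) = (a ^ 2 + y ^ 2) / (4 * s) - s := by
    unfold Lf; field_simp
  have hy : y ^ 2 / 4 ≤ y ^ 2 / (4 * s) :=
    div_le_div_of_nonneg_left (sq_nonneg y) (by positivity) (by linarith)
  have ha : y ^ 2 / (4 * s) ≤ (a ^ 2 + y ^ 2) / (4 * s) := by gcongr; nlinarith [sq_nonneg a]
  linarith

lemma le_of_mem_Jset {pq : ℝ → ℝ} (hpq0 : pq 0 = 0) {x y c : ℝ} (hc : c ∈ Jset pq x y) :
    y ^ 2 / 4 - 1 ≤ c := by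
  rcases hc with (rfl | ⟨τ, z, hτ₀, hτ₁, -, -, rfl⟩) | hc
  · unfold Lf; nlinarith [sq_nonneg x]
  · have hfield := sub_le_mul_Lf_div (s := 1 - τ) (by linarith) (by linarith) (x - z) y
    nlinarith [neg_one_le_Lr hpq0 (z / τ)]
  · split_ifs at hc with hy
    · rw [Set.mem_singleton_iff.mp hc, hy]
      linarith [neg_one_le_Lr hpq0 x]
    · exact absurd hc (Set.notMem_empty c)

lemma le_J {pq : ℝ → ℝ} (hpq0 : pq 0 = 0) (x y : ℝ) : y ^ 2 / 4 - 1 ≤ J pq x y :=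
  le_csInf ⟨_, Or.inl (Or.inl rfl)⟩ fun _ hc => le_of_mem_Jset hpq0 hc

lemma J_pos {pq : ℝ → ℝ} (hpq0 : pq 0 = 0) (x : ℝ) {y : ℝ} (hy : 2 < y) : 0 < J pq x y := by
  nlinarith [le_J hpq0 x y]

lemma cstar_mul_cos_le {pq : ℝ → ℝ} (hpq0 : pq 0 = 0) {ϑ : ℝ} (hcos : 0 ≤ Real.cos ϑ) :
    cstar pq ϑ * Real.cos ϑ ≤ 2 := by
  rcases hcos.eq_or_lt with hcos | hcos
  · simp [← hcos]
  -- `Real.sSup_le` also covers an empty set, whose supremum is `0`.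
  have hle : cstar pq ϑ ≤ 2 / Real.cos ϑ := by
    refine Real.sSup_le (fun r ⟨_, hJ⟩ => ?_) (by positivity)
    rw [le_div_iff₀ hcos]
    exact not_lt.mp fun h => hJ.not_gt (J_pos hpq0 _ h)
  calc cstar pq ϑ * Real.cos ϑ ≤ 2 / Real.cos ϑ * Real.cos ϑ := by gcongr
    _ = 2 := div_mul_cancel₀ 2 hcos.ne'

theorem wulff_in_strip_general
    (D μ ν κ : ℝ)
    (pq : ℝ → ℝ) (hpq : IsCriticalSlope D μ ν κ pq) :
    (∀ x y : ℝ, 2 < y → 0 < J pq x y) ∧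
    (∀ x y : ℝ, 0 ≤ y → J pq x y ≤ 0 → y ≤ 2) ∧
    (∀ ϑ : ℝ, 0 ≤ ϑ → ϑ ≤ π / 2 → cstar pq ϑ * Real.cos ϑ ≤ 2) := by
  have hpq0 := hpq.map_zero
  refine ⟨fun x y hy => J_pos hpq0 x hy, fun x y _ hJ => ?_, fun ϑ _ hϑ₁ => ?_⟩
  · exact not_lt.mp fun hy => hJ.not_gt (J_pos hpq0 x hy)
  · exact cstar_mul_cos_le hpq0 (Real.cos_nonneg_of_mem_Icc ⟨by linarith [Real.pi_pos], hϑ₁⟩)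

/-- The Wulff shape lies in the strip `{y ≤ 2}`: `J(x,y) > 0` whenever
`y > 2`; consequently `J(x,y) ≤ 0` with `y ≥ 0` forces `y ≤ 2`, and
`c_*(ϑ) cos ϑ ≤ 2` for all `ϑ ∈ [0, π/2]`. -/
theorem wulff_in_strip
    (D μ ν κ : ℝ) (hD : 1 < D) (hμ : 0 < μ) (hν : 0 < ν) (hκ : 0 < κ)
    (pq : ℝ → ℝ) (hpq : IsCriticalSlope D μ ν κ pq) :
    (∀ x y : ℝ, 2 < y → 0 < J pq x y) ∧
    (∀ x y : ℝ, 0 ≤ y → J pq x y ≤ 0 → y ≤ 2) ∧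
    (∀ ϑ : ℝ, 0 ≤ ϑ → ϑ ≤ π / 2 → cstar pq ϑ * Real.cos ϑ ≤ 2) :=
  wulff_in_strip_general D μ ν κ pq hpq
end
end
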